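/- Let ε ∈ (0, 1/2) with 1/ε ∈ ℕ, let V be a random vector in ℝ^d whose coordinates are independent and uniformly distributed on the finite set A = {0, 2ε, 4ε, …, 1} (which has 1/(2ε) + 1 elements), and let Z ~ U([−ε; ε]^d) be independent of V. Then V + Z is uniformly distributed on [−ε; 1 + ε]^d, and I(V; V + Z) = d·log(1 + 1/(2ε)). -/

import Mathlib

open MeasureTheory ProbabilityTheory Real Set
open scoped ENNReal NNReal ProbabilityTheory

noncomputable section

/-- Differential entropy `h(X) = -E[log p_X(X)]` of a random vector `X`, where `p_X` denotes
the density (Radon-Nikodym derivative) of the law of `X` w.r.t. the reference volume measure. -/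
def dEnt {Ω E : Type*} [MeasurableSpace Ω] [MeasureSpace E]
    (P : Measure Ω) (X : Ω → E) : ℝ :=
  - ∫ e, Real.log (((P.map X).rnDeriv volume e).toReal) ∂(P.map X)

/-- Conditional differential entropy `h(X | Y) = h(X, Y) - h(Y)`. -/
def condEnt {Ω E F : Type*} [MeasurableSpace Ω] [MeasureSpace E] [MeasureSpace F]
    (P : Measure Ω) (X : Ω → E) (Y : Ω → F) : ℝ :=
  dEnt P (fun ω => (X ω, Y ω)) - dEnt P Y

/-- Mutual information `I(X; Y) = h(Y) - h(Y | X)`. -/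
def MI {Ω E F : Type*} [MeasurableSpace Ω] [MeasureSpace E] [MeasureSpace F]
    (P : Measure Ω) (X : Ω → E) (Y : Ω → F) : ℝ :=
  dEnt P Y - condEnt P Y X

/-- Conditional mutual information `I(X; Y | W) = h(X | W) - h(X | Y, W)`. -/
def condMI {Ω E F G : Type*} [MeasurableSpace Ω] [MeasureSpace E] [MeasureSpace F]
    [MeasureSpace G] (P : Measure Ω) (X : Ω → E) (Y : Ω → F) (W : Ω → G) : ℝ :=
  condEnt P X W - condEnt P X (fun ω => (Y ω, W ω))

/-- Kullback–Leibler divergence `D_KL(μ ‖ ν) = ∫ log (dμ/dν) dμ`. -/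
def KL {E : Type*} [MeasurableSpace E] (μ ν : Measure E) : ℝ :=
  ∫ x, Real.log ((μ.rnDeriv ν x).toReal) ∂μ

/-- Density of the Gaussian distribution `N(m, S)` on `ℝ^d`. -/
def gaussDensity (d : ℕ) (m : Fin d → ℝ) (S : Matrix (Fin d) (Fin d) ℝ) (x : Fin d → ℝ) : ℝ :=
  (Real.sqrt ((2 * π) ^ d * S.det))⁻¹ *
    Real.exp (-(1 / 2) * ∑ i, ∑ j, (x i - m i) * S⁻¹ i j * (x j - m j))

/-- The Gaussian distribution `N(m, S)` on `ℝ^d`. -/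
def gaussMeasure (d : ℕ) (m : Fin d → ℝ) (S : Matrix (Fin d) (Fin d) ℝ) :
    Measure (Fin d → ℝ) :=
  volume.withDensity fun x => ENNReal.ofReal (gaussDensity d m S x)

/-- The centered isotropic Gaussian distribution `N(0, c·I)` on `ℝ^d`. -/
def isoGauss (d : ℕ) (c : ℝ) : Measure (Fin d → ℝ) :=
  volume.withDensity fun x =>
    ENNReal.ofReal ((2 * π * c) ^ (-(d : ℝ) / 2) * Real.exp (-(∑ i, (x i) ^ 2) / (2 * c)))

/-- The uniform distribution on a set `S` (of positive finite volume). -/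
def unif {E : Type*} [MeasureSpace E] (S : Set E) : Measure E :=
  (volume S)⁻¹ • volume.restrict S

/-- The cube `[a, b]^d ⊆ ℝ^d`. -/
def cube (d : ℕ) (a b : ℝ) : Set (Fin d → ℝ) :=
  Set.univ.pi fun _ => Set.Icc a b

/-- The uniform distribution on the finite set `A = {0, 2ε, 4ε, …, 1} ⊆ ℝ`
consisting of `1/(2ε) + 1` points. -/
def discUnif (ε : ℝ) : Measure ℝ :=
  (ENNReal.ofReal (1 / (2 * ε) + 1))⁻¹ •
    Measure.sum (fun k : ℕ => if (k : ℝ) ≤ 1 / (2 * ε) then Measure.dirac (2 * ε * k) else 0)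

/-- The encoder `f` is weakly invariant to the data augmentation `X → X'` if there is a
measurable `g` with `f(X) = g(f(X)) = g(f(X'))` almost surely. -/
def WeakInv {Ω α E : Type*} [MeasurableSpace Ω] [MeasurableSpace E]
    (P : Measure Ω) (f : α → E) (X X' : Ω → α) : Prop :=
  ∃ g : E → E, Measurable g ∧
    ∀ᵐ ω ∂P, f (X ω) = g (f (X ω)) ∧ f (X ω) = g (f (X' ω))

/-! Convolving the uniform law on the grid `{0, 2ε, …, 1}` with `U[-ε, ε]` gives `U[-ε, 1 + ε]`,
because the translates `[2εk - ε, 2εk + ε]` tile `[-ε, 1 + ε]` up to null sets. Convolution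
commutes with finite products of measures, so the same holds coordinatewise on `ℝ^d`, and by
independence the law of `V + Z` is the convolution of the laws of `V` and `Z`. The differential
entropy of a uniform law is the logarithm of the volume of its support, so the difference of
entropies is `d log(1 + 2ε) - d log(2ε)`. -/

namespace MeasureTheory.Measure

theorem finset_sum_conv {M ι : Type*} [AddMonoid M] [MeasurableSpace M] [MeasurableAdd₂ M]
    (s : Finset ι) (μ : ι → Measure M) (ν : Measure M) [SFinite ν] :
    (∑ i ∈ s, μ i) ∗ ν = ∑ i ∈ s, μ i ∗ ν := by
  refine ext_of_lintegral _ fun f hf => ?_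
  simp only [lintegral_conv hf, lintegral_finsetSum_measure]

theorem pi_conv_pi {ι M : Type*} [Fintype ι] [AddMonoid M] [MeasurableSpace M]
    [MeasurableAdd₂ M] (μ ν : ι → Measure M) [∀ i, SigmaFinite (μ i)] [∀ i, SigmaFinite (ν i)]
    [hμν : ∀ i, SigmaFinite (μ i ∗ ν i)] :
    Measure.pi μ ∗ Measure.pi ν = Measure.pi fun i => μ i ∗ ν i := by
  rw [conv, ← (measurePreserving_arrowProdEquivProdArrow M M ι μ ν).map_eq,
    map_map (by fun_prop) (MeasurableEquiv.measurable _)]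
  exact pi_map_pi (hμ := hμν) fun i =>
    (by fun_prop : Measurable fun x : M × M => x.1 + x.2).aemeasurable

theorem restrict_Ioc_eq_sum {α : Type*} [LinearOrder α] [MeasurableSpace α] [TopologicalSpace α]
    [OrderClosedTopology α] [OpensMeasurableSpace α] (μ : Measure α) {f : ℕ → α}
    (hf : Monotone f) (n : ℕ) :
    μ.restrict (Ioc (f 0) (f n)) = ∑ k ∈ Finset.range n, μ.restrict (Ioc (f k) (f (k + 1))) := by
  induction n with
  | zero => simp
  | succ n ih =>
    rw [Finset.sum_range_succ, ← ih, ← Ioc_union_Ioc_eq_Ioc (hf n.zero_le) (hf n.le_succ),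
      restrict_union (Ioc_disjoint_Ioc_of_le le_rfl) measurableSet_Ioc]

theorem isProbabilityMeasure_of_pi {ι α : Type*} [Fintype ι] [Nonempty ι] [MeasurableSpace α]
    {μ : Measure α} [SigmaFinite μ] (h : IsProbabilityMeasure (Measure.pi fun _ : ι => μ)) :
    IsProbabilityMeasure μ := by
  have hpow := h.measure_univ
  rw [pi_univ, Finset.prod_const, ← one_pow (Finset.univ : Finset ι).card] at hpow
  exact ⟨(ENNReal.pow_right_strictMono Finset.univ_nonempty.card_pos.ne').injective hpow⟩

end MeasureTheory.Measure

instance isFiniteMeasure_unif {E : Type*} [MeasureSpace E] (S : Set E) :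
    IsFiniteMeasure (unif S) :=
  inferInstanceAs (IsFiniteMeasure (volume[|S]))

theorem unif_apply {E : Type*} [MeasureSpace E] (S : Set E) {t : Set E} (ht : MeasurableSet t) :
    unif S t = (volume S)⁻¹ * volume (t ∩ S) := by
  rw [unif, Measure.smul_apply, Measure.restrict_apply ht, smul_eq_mul]

theorem unif_univ_pi {ι : Type*} [Fintype ι] {α : ι → Type*} [∀ i, MeasureSpace (α i)]
    [∀ i, SigmaFinite (volume : Measure (α i))] {s : ∀ i, Set (α i)}
    (hfin : ∀ i, volume (s i) ≠ ∞) :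
    unif (univ.pi s) = Measure.pi fun i => unif (s i) := by
  refine (Measure.pi_eq fun t ht => ?_).symm
  rw [unif_apply _ (.univ_pi ht), ← pi_inter_distrib, volume_pi_pi, volume_pi_pi,
    ENNReal.prod_inv_distrib fun i _ j _ _ => .inr (hfin j), ← Finset.prod_mul_distrib]
  exact Finset.prod_congr rfl fun i _ => (unif_apply _ (ht i)).symm

theorem unif_cube (d : ℕ) (a b : ℝ) :
    unif (cube d a b) = Measure.pi fun _ : Fin d => unif (Icc a b) :=
  unif_univ_pi fun _ => measure_Icc_lt_top.ne

theorem volume_cube (d : ℕ) {a b : ℝ} : volume (cube d a b) = ENNReal.ofReal (b - a) ^ d := by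
  rw [cube, volume_pi_pi]
  simp [Real.volume_Icc]

theorem unif_Icc (a b : ℝ) :
    unif (Icc a b) = (ENNReal.ofReal (b - a))⁻¹ • volume.restrict (Ioc a b) := by
  rw [unif, Real.volume_Icc, Measure.restrict_congr_set Ioc_ae_eq_Icc]

theorem map_const_add_unif_Icc (c a b : ℝ) :
    (unif (Icc a b)).map (c + ·) = unif (Icc (c + a) (c + b)) := by
  have hpre : (c + ·) ⁻¹' Icc (c + a) (c + b) = Icc a b := by simp
  rw [unif, Measure.map_smul, ← hpre, ((measurePreserving_add_left volume c).restrict_preimage_emb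
    (measurableEmbedding_addLeft c) _).map_eq, hpre, unif, Real.volume_Icc, Real.volume_Icc,
    add_sub_add_left_eq_sub]

theorem dEnt_eq_log_volume_of_map_eq_unif {Ω E : Type*} [MeasurableSpace Ω] [MeasureSpace E]
    [SigmaFinite (volume : Measure E)] (P : Measure Ω) (X : Ω → E) {S : Set E}
    (hS : MeasurableSet S) (h0 : volume S ≠ 0) (htop : volume S ≠ ∞) (hX : P.map X = unif S) :
    dEnt P X = Real.log (volume S).toReal := by
  have : IsProbabilityMeasure (unif S) := cond_isProbabilityMeasure_of_finite h0 htop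
  have hdensity : (unif S).rnDeriv volume =ᵐ[volume] S.indicator fun _ => (volume S)⁻¹ := by
    rw [unif, ← withDensity_const, ← withDensity_indicator hS]
    exact Measure.rnDeriv_withDensity volume (measurable_const.indicator hS)
  have hlog : ∀ᵐ e ∂unif S, Real.log ((unif S).rnDeriv volume e).toReal
      = Real.log ((volume S)⁻¹).toReal := by
    filter_upwards [cond_absolutelyContinuous.ae_le hdensity, ae_cond_mem hS] with e he hmem
    rw [he, indicator_of_mem hmem]
  rw [dEnt, hX, integral_congr_ae hlog, integral_const, probReal_univ, one_smul,
    ENNReal.toReal_inv, Real.log_inv, neg_neg]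

theorem dEnt_eq_of_map_eq_unif_cube {Ω : Type*} [MeasurableSpace Ω] (P : Measure Ω) {d : ℕ}
    (X : Ω → (Fin d → ℝ)) {a b : ℝ} (hab : a < b) (hX : P.map X = unif (cube d a b)) :
    dEnt P X = d * Real.log (b - a) := by
  have hS : MeasurableSet (cube d a b) := .univ_pi fun _ => measurableSet_Icc
  have hvol := volume_cube d (a := a) (b := b)
  rw [dEnt_eq_log_volume_of_map_eq_unif P X hS (by simp [hvol, hab]) (by simp [hvol]) hX, hvol,
    ENNReal.toReal_pow, ENNReal.toReal_ofReal (by linarith), Real.log_pow]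

def gridUnif (h : ℝ) (n : ℕ) : Measure ℝ :=
  ((n : ℝ≥0∞) + 1)⁻¹ • ∑ k ∈ Finset.range (n + 1), Measure.dirac (h * k)

theorem discUnif_eq_smul_sum_dirac {ε : ℝ} (hε : 0 < ε) :
    discUnif ε = (ENNReal.ofReal (1 / (2 * ε) + 1))⁻¹ •
      ∑ k ∈ Finset.range (⌊1 / (2 * ε)⌋₊ + 1), Measure.dirac (2 * ε * k) := by
  rw [discUnif]
  congr 1
  ext s hs
  rw [Measure.sum_apply _ hs, Measure.finsetSum_apply]
  refine (tsum_eq_sum fun k hk => ?_).trans (Finset.sum_congr rfl fun k hk => ?_) <;>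
    rw [Finset.mem_range, Nat.lt_succ_iff, Nat.le_floor_iff (by positivity)] at hk
  · rw [if_neg hk]
    rfl
  · rw [if_pos hk]

theorem discUnif_univ {ε : ℝ} (hε : 0 < ε) :
    discUnif ε univ = (ENNReal.ofReal (1 / (2 * ε) + 1))⁻¹ * (⌊1 / (2 * ε)⌋₊ + 1) := by
  simp [discUnif_eq_smul_sum_dirac hε]

theorem isFiniteMeasure_discUnif {ε : ℝ} (hε : 0 < ε) : IsFiniteMeasure (discUnif ε) := by
  refine ⟨?_⟩
  rw [discUnif_univ hε]
  exact ENNReal.mul_lt_top (ENNReal.inv_lt_top.2 (ENNReal.ofReal_pos.2 (by positivity))) (by simp)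

theorem natCast_floor_eq_of_isProbabilityMeasure_discUnif {ε : ℝ} (hε : 0 < ε)
    [h : IsProbabilityMeasure (discUnif ε)] : (⌊1 / (2 * ε)⌋₊ : ℝ) = 1 / (2 * ε) := by
  have hmass := h.measure_univ
  rw [discUnif_univ hε, ← ENNReal.div_eq_inv_mul,
    ENNReal.div_eq_one_iff (by simp; positivity) ENNReal.ofReal_ne_top, ← ENNReal.ofReal_natCast,
    ← ENNReal.ofReal_one, ← ENNReal.ofReal_add (by positivity) zero_le_one,
    ENNReal.ofReal_eq_ofReal_iff (by positivity) (by positivity)] at hmass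
  linarith

theorem discUnif_eq_gridUnif {ε : ℝ} {n : ℕ} (hn : 2 * ε * n = 1) :
    discUnif ε = gridUnif (2 * ε) n := by
  have hε : 0 < ε := by
    by_contra! h
    nlinarith [(n.cast_nonneg : (0 : ℝ) ≤ n)]
  have hx : 1 / (2 * ε) = n := by field_simp; linarith
  rw [discUnif_eq_smul_sum_dirac hε, gridUnif, hx, Nat.floor_natCast]
  congr 2
  exact_mod_cast ENNReal.ofReal_natCast (n + 1)

theorem gridUnif_conv_unif_Icc {ε : ℝ} (hε : 0 < ε) (n : ℕ) :
    gridUnif (2 * ε) n ∗ unif (Icc (-ε) ε) = unif (Icc (-ε) (2 * ε * n + ε)) := by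
  set f : ℕ → ℝ := fun k => 2 * ε * k - ε
  have hf : Monotone f := fun j k hjk => by simp only [f]; gcongr
  have hblock (k : ℕ) : Measure.dirac (2 * ε * k) ∗ unif (Icc (-ε) ε) =
      (ENNReal.ofReal (2 * ε))⁻¹ • volume.restrict (Ioc (f k) (f (k + 1))) := by
    rw [Measure.dirac_conv, map_const_add_unif_Icc, unif_Icc]
    simp only [f]
    push_cast
    ring_nf
  have hlength : ENNReal.ofReal (2 * ε * n + ε - -ε) = (n + 1) * ENNReal.ofReal (2 * ε) := by
    rw [show 2 * ε * n + ε - -ε = (n + 1 : ℕ) * (2 * ε) by push_cast; ring,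
      ENNReal.ofReal_mul (by positivity), ENNReal.ofReal_natCast, Nat.cast_add_one]
  rw [gridUnif, Measure.conv_smul_left, Measure.finset_sum_conv,
    Finset.sum_congr rfl fun k _ => hblock k, ← Finset.smul_sum,
    ← Measure.restrict_Ioc_eq_sum volume hf, smul_smul, unif_Icc, hlength,
    ENNReal.mul_inv (by simp) (by simp)]
  congr <;> simp only [f] <;> push_cast <;> ring

theorem stmt15_general {Ω : Type*} [MeasurableSpace Ω] (P : Measure Ω) [IsProbabilityMeasure P]
    {d : ℕ} (V Z : Ω → (Fin d → ℝ)) (hV : Measurable V) (hZ : Measurable Z)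
    (ε : ℝ) (hε0 : 0 < ε)
    (hVlaw : P.map V = Measure.pi fun _ : Fin d => discUnif ε)
    (hZlaw : P.map Z = unif (cube d (-ε) ε))
    (hindep : IndepFun V Z P) :
    P.map (fun ω => V ω + Z ω) = unif (cube d (-ε) (1 + ε)) ∧
    dEnt P (fun ω => V ω + Z ω) - dEnt P Z = (d : ℝ) * Real.log (1 + 1 / (2 * ε)) := by
  have hsum : P.map (fun ω => V ω + Z ω) = unif (cube d (-ε) (1 + ε)) := by
    have := isFiniteMeasure_discUnif hε0
    rw [← Pi.add_def, hindep.map_add_eq_map_conv_map hV hZ, hVlaw, hZlaw, unif_cube, unif_cube,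
      Measure.pi_conv_pi]
    congr 1
    funext i
    have : Nonempty (Fin d) := ⟨i⟩
    -- `P.map V` is a probability measure, and this forces `1 / (2ε) ∈ ℕ`.
    have : IsProbabilityMeasure (Measure.pi fun _ : Fin d => discUnif ε) :=
      hVlaw ▸ Measure.isProbabilityMeasure_map hV.aemeasurable
    have := Measure.isProbabilityMeasure_of_pi this
    have hN := natCast_floor_eq_of_isProbabilityMeasure_discUnif hε0
    rw [discUnif_eq_gridUnif (n := ⌊1 / (2 * ε)⌋₊) (by rw [hN]; field_simp),
      gridUnif_conv_unif_Icc hε0, hN]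
    congr 2
    field_simp
  refine ⟨hsum, ?_⟩
  rw [dEnt_eq_of_map_eq_unif_cube P _ (by linarith) hsum,
    dEnt_eq_of_map_eq_unif_cube P _ (by linarith) hZlaw, ← mul_sub,
    ← Real.log_div (by linarith) (by linarith)]
  congr 2
  field_simp
  ring

/-- Let `ε ∈ (0, 1/2)` with `1/ε ∈ ℕ`, let `V` have independent coordinates
uniformly distributed on the finite set `A = {0, 2ε, 4ε, …, 1}`, and let `Z ~ U([-ε, ε]^d)` be
independent of `V`. Then `V + Z ~ U([-ε, 1+ε]^d)` and
`I(V; V + Z) = h(V + Z) - h(Z) = d·log(1 + 1/(2ε))`. -/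
theorem stmt15 {Ω : Type*} [MeasurableSpace Ω] (P : Measure Ω) [IsProbabilityMeasure P]
    {d : ℕ} (V Z : Ω → (Fin d → ℝ)) (hV : Measurable V) (hZ : Measurable Z)
    (ε : ℝ) (hε0 : 0 < ε) (hε2 : ε < 1 / 2) (hεnat : ∃ m : ℕ, (m : ℝ) = 1 / ε)
    (hVlaw : P.map V = Measure.pi fun _ : Fin d => discUnif ε)
    (hZlaw : P.map Z = unif (cube d (-ε) ε))
    (hindep : IndepFun V Z P) :
    P.map (fun ω => V ω + Z ω) = unif (cube d (-ε) (1 + ε)) ∧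
    dEnt P (fun ω => V ω + Z ω) - dEnt P Z = (d : ℝ) * Real.log (1 + 1 / (2 * ε)) :=
  stmt15_general P V Z hV hZ ε hε0 hVlaw hZlaw hindep
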